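/- arXiv:1605.05176 — 3 statements merged into one kernel-verified Lean document; each statement's English description precedes it below -/
import Mathlib

section
/- Let u ∈ L¹_loc(ℝⁿ) be nonnegative, let Q₀ be a cube, and define U₁(x) = sup { (1/|Q|)∫_Q u : Q a cube containing x with ℓ(Q) ≤ ℓ(Q₀) }. Then for every x ∈ Q₀, U₁(x) − u_{3Q₀} ≤ M[1_{3Q₀}(u − u_{3Q₀})](x), where M is the non-centred Hardy–Littlewood maximal function over axis-parallel cubes and u_{3Q₀} denotes the average of u over 3Q₀. -/
open MeasureTheory Metric ENNReal

/-- The non-centred Hardy–Littlewood maximal function over axis-parallel cubes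
(= sup-metric balls in `Fin n → ℝ`). -/
noncomputable def maximalFn {n : ℕ} (f : (Fin n → ℝ) → ℝ) (x : Fin n → ℝ) : ℝ≥0∞ :=
  ⨆ (c : Fin n → ℝ) (r : ℝ) (_ : 0 < r) (_ : x ∈ ball c r),
    ENNReal.ofReal (⨍ y in ball c r, |f y|)

/-! Since `Q ⊆ 3Q₀`, the function `1_{3Q₀}(u − u_{3Q₀})` equals `u − u_{3Q₀}` on `Q`, so
`u_Q − u_{3Q₀}` is its average over `Q`; this is at most the average of its absolute value over
`Q`, which is one of the averages in the supremum defining the maximal function at `x`. -/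

theorem Metric.ball_subset_ball_three_mul {X : Type*} [PseudoMetricSpace X] {x c c₀ : X}
    {r r₀ : ℝ} (hx : x ∈ ball c₀ r₀) (hxc : x ∈ ball c r) (hr : r ≤ r₀) :
    ball c r ⊆ ball c₀ (3 * r₀) := by
  refine ball_subset_ball' ?_
  have hcx : dist c x < r := by rwa [dist_comm]
  linarith [dist_triangle c x c₀, mem_ball.1 hx]

section Average

variable {α : Type*} [MeasurableSpace α] {μ : Measure α}

theorem MeasureTheory.average_le_average_abs (f : α → ℝ) :
    ⨍ x, f x ∂μ ≤ ⨍ x, |f x| ∂μ := by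
  rw [average_eq, average_eq, smul_eq_mul, smul_eq_mul]
  exact mul_le_mul_of_nonneg_left ((le_abs_self _).trans abs_integral_le_integral_abs)
    (inv_nonneg.2 measureReal_nonneg)

theorem MeasureTheory.setAverage_sub_const {E : Type*} [NormedAddCommGroup E] [NormedSpace ℝ E]
    [CompleteSpace E] {s : Set α} {f : α → E} (hs₀ : μ s ≠ 0) (hs : μ s ≠ ∞)
    (hf : IntegrableOn f s μ) (a : E) :
    ⨍ x in s, (f x - a) ∂μ = ⨍ x in s, f x ∂μ - a := by
  rw [setAverage_eq, integral_sub hf (integrableOn_const hs), smul_sub, ← setAverage_eq,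
    ← setAverage_eq, setAverage_const hs₀ hs]

theorem MeasureTheory.setAverage_sub_const_le_setAverage_abs_indicator {s t : Set α} {f : α → ℝ}
    (hs : MeasurableSet s) (hst : s ⊆ t) (hμs₀ : μ s ≠ 0) (hμs : μ s ≠ ∞)
    (hf : IntegrableOn f s μ) (a : ℝ) :
    ⨍ x in s, f x ∂μ - a ≤ ⨍ x in s, |t.indicator (fun z => f z - a) x| ∂μ := by
  have hind : ⨍ x in s, |t.indicator (fun z => f z - a) x| ∂μ = ⨍ x in s, |f x - a| ∂μ :=
    setAverage_congr_fun hs <| .of_forall fun x hx => by rw [Set.indicator_of_mem (hst hx)]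
  rw [hind, ← setAverage_sub_const hμs₀ hμs hf]
  exact average_le_average_abs _

end Average

theorem ofReal_setAverage_abs_le_maximalFn {n : ℕ} (f : (Fin n → ℝ) → ℝ) {x c : Fin n → ℝ}
    {r : ℝ} (hr : 0 < r) (hx : x ∈ ball c r) :
    ENNReal.ofReal (⨍ y in ball c r, |f y|) ≤ maximalFn f x :=
  le_iSup_of_le c <| le_iSup_of_le r <| le_iSup_of_le hr <| le_iSup_of_le hx le_rfl

theorem stmt2_general (n : ℕ) (u : (Fin n → ℝ) → ℝ) (hu : LocallyIntegrable u volume)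
    (c₀ : Fin n → ℝ) (r₀ : ℝ)
    (x : Fin n → ℝ) (hx : x ∈ ball c₀ r₀)
    (c : Fin n → ℝ) (r : ℝ) (hr : 0 < r) (hrle : r ≤ r₀) (hxc : x ∈ ball c r) :
    ENNReal.ofReal ((⨍ y in ball c r, u y) - ⨍ y in ball c₀ (3 * r₀), u y) ≤
      maximalFn (Set.indicator (ball c₀ (3 * r₀))
        (fun z => u z - ⨍ w in ball c₀ (3 * r₀), u w)) x := by
  have hu_ball : IntegrableOn u (ball c r) :=
    (hu.integrableOn_isCompact (isCompact_closedBall c r)).mono_set ball_subset_closedBall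
  calc ENNReal.ofReal ((⨍ y in ball c r, u y) - ⨍ y in ball c₀ (3 * r₀), u y)
      ≤ ENNReal.ofReal (⨍ y in ball c r,
          |(ball c₀ (3 * r₀)).indicator (fun z => u z - ⨍ w in ball c₀ (3 * r₀), u w) y|) :=
        ENNReal.ofReal_le_ofReal <| setAverage_sub_const_le_setAverage_abs_indicator
          measurableSet_ball (ball_subset_ball_three_mul hx hxc hrle)
          (measure_ball_pos volume c hr).ne' measure_ball_lt_top.ne hu_ball _
    _ ≤ _ := ofReal_setAverage_abs_le_maximalFn _ hr hxc

/-- For `x ∈ Q₀` and any cube `Q ∋ x` with side `≤` side of `Q₀`,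
`u_Q − u_{3Q₀} ≤ M[1_{3Q₀}(u − u_{3Q₀})](x)`; taking the sup over such `Q` this is
`U₁(x) − u_{3Q₀} ≤ M[1_{3Q₀}(u − u_{3Q₀})](x)`. -/
theorem stmt2 (n : ℕ) (u : (Fin n → ℝ) → ℝ) (hu : LocallyIntegrable u volume)
    (hu0 : ∀ x, 0 ≤ u x) (c₀ : Fin n → ℝ) (r₀ : ℝ) (hr₀ : 0 < r₀)
    (x : Fin n → ℝ) (hx : x ∈ ball c₀ r₀)
    (c : Fin n → ℝ) (r : ℝ) (hr : 0 < r) (hrle : r ≤ r₀) (hxc : x ∈ ball c r) :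
    ENNReal.ofReal ((⨍ y in ball c r, u y) - ⨍ y in ball c₀ (3 * r₀), u y) ≤
      maximalFn (Set.indicator (ball c₀ (3 * r₀))
        (fun z => u z - ⨍ w in ball c₀ (3 * r₀), u w)) x :=
  stmt2_general n u hu c₀ r₀ x hx c r hr hrle hxc
end

section
/- Let A = Q' \ Q'' be an annulus where Q' and Q'' are concentric axis-parallel cubes with side lengths ℓ' and ℓ'' satisfying ℓ' − ℓ'' = 2r. Then for any axis-parallel cube P, the intersection satisfies |P ∩ A| ≤ C(n) · r · |P|^{(n−1)/n}. -/
/-!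
Balls in the sup metric of `ι → ℝ` are cubes. A point of the annulus `ball c R \ ball c ρ` lies,
in some coordinate `i`, in the one-dimensional annulus of total length `2 (R - ρ)`; so `P ∩ A` is
covered by `n` slabs, each contained in a box with one side of length `2 (R - ρ) = 2r` and `n - 1`
sides of length `s`. Hence `|P ∩ A| ≤ 2 n r s ^ (n - 1) = 2 n r |P| ^ ((n - 1) / n)`.
-/

open MeasureTheory Metric ENNReal

theorem Real.volume_ball_diff_ball_le (a : ℝ) {ρ : ℝ} (hρ : 0 ≤ ρ) (R : ℝ) :
    volume (ball a R \ ball a ρ) ≤ ENNReal.ofReal (2 * (R - ρ)) := by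
  rcases le_total ρ R with hρR | hRρ
  · rw [measure_sdiff (ball_subset_ball hρR) measurableSet_ball.nullMeasurableSet
      measure_ball_lt_top.ne, Real.volume_ball, Real.volume_ball,
      ← ENNReal.ofReal_sub _ (by positivity), mul_sub]
  · simp [Set.sdiff_eq_empty.2 (ball_subset_ball hRρ)]

theorem Metric.ball_diff_ball_subset_iUnion_eval_preimage {ι : Type*} [Fintype ι] [Nonempty ι]
    {X : ι → Type*} [∀ i, PseudoMetricSpace (X i)] (c : ∀ i, X i) (R ρ : ℝ) :
    ball c R \ ball c ρ ⊆ ⋃ i, Function.eval i ⁻¹' (ball (c i) R \ ball (c i) ρ) := by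
  simp only [ball_pi' c R, ball_pi' c ρ, Set.subset_def, Set.mem_sdiff, Set.mem_univ_pi,
    Set.mem_iUnion, Set.mem_preimage, Function.eval]
  rintro x ⟨hxR, hxρ⟩
  push Not at hxρ
  obtain ⟨i, hi⟩ := hxρ
  exact ⟨i, hxR i, hi⟩

theorem Real.volume_pi_ball_inter_eval_preimage_le {ι : Type*} [Fintype ι]
    (p : ι → ℝ) (δ : ℝ) (i : ι) (T : Set ℝ) :
    volume (ball p δ ∩ Function.eval i ⁻¹' T) ≤
      volume T * ENNReal.ofReal (2 * δ) ^ (Fintype.card ι - 1) := by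
  classical
  have hsub : ball p δ ∩ Function.eval i ⁻¹' T ⊆
      Set.pi Set.univ (Function.update (fun j => ball (p j) δ) i T) := by
    rintro x ⟨hxp, hxT⟩ j -
    rcases eq_or_ne j i with rfl | hji
    · simpa using hxT
    · rw [Function.update_of_ne hji]
      exact (dist_le_pi_dist x p j).trans_lt hxp
  calc volume (ball p δ ∩ Function.eval i ⁻¹' T)
      ≤ volume (Set.pi Set.univ (Function.update (fun j => ball (p j) δ) i T)) :=
        measure_mono hsub
    _ = volume T * ∏ j ∈ Finset.univ \ {i}, volume (ball (p j) δ) := by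
        rw [volume_pi_pi, ← Finset.prod_update_of_mem (Finset.mem_univ i)]
        congr 1 with j
        rcases eq_or_ne j i with rfl | hji <;> simp [Function.update_of_ne, *]
    _ = volume T * ENNReal.ofReal (2 * δ) ^ (Fintype.card ι - 1) := by
        simp [Real.volume_ball, Finset.card_univ_sdiff]

theorem Real.volume_pi_ball_inter_ball_diff_ball_le {ι : Type*} [Fintype ι] [Nonempty ι]
    (p c : ι → ℝ) (δ R : ℝ) {ρ : ℝ} (hρ : 0 ≤ ρ) :
    volume (ball p δ ∩ (ball c R \ ball c ρ)) ≤
      Fintype.card ι * (ENNReal.ofReal (2 * (R - ρ)) *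
        ENNReal.ofReal (2 * δ) ^ (Fintype.card ι - 1)) := by
  calc volume (ball p δ ∩ (ball c R \ ball c ρ))
      ≤ volume (⋃ i, ball p δ ∩ Function.eval i ⁻¹' (ball (c i) R \ ball (c i) ρ)) := by
        rw [← Set.inter_iUnion]
        exact measure_mono (Set.inter_subset_inter_right _
          (ball_diff_ball_subset_iUnion_eval_preimage c R ρ))
    _ ≤ ∑ i, volume (ball p δ ∩ Function.eval i ⁻¹' (ball (c i) R \ ball (c i) ρ)) :=
        measure_iUnion_fintype_le _ _
    _ ≤ ∑ _i : ι, ENNReal.ofReal (2 * (R - ρ)) *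
          ENNReal.ofReal (2 * δ) ^ (Fintype.card ι - 1) := by
        gcongr with i
        exact (Real.volume_pi_ball_inter_eval_preimage_le p δ i _).trans
          (mul_le_mul_left (Real.volume_ball_diff_ball_le _ hρ R) _)
    _ = _ := by rw [Finset.sum_const, Finset.card_univ, nsmul_eq_mul]

theorem ENNReal.pow_rpow_sub_one_div (a : ℝ≥0∞) {n : ℕ} (hn : 0 < n) :
    (a ^ n) ^ (((n : ℝ) - 1) / n) = a ^ (n - 1) := by
  rw [← ENNReal.rpow_natCast, ← ENNReal.rpow_mul, ← ENNReal.rpow_natCast,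
    mul_div_cancel₀ _ (by positivity : (n : ℝ) ≠ 0), Nat.cast_sub hn, Nat.cast_one]

/-- A thin cubic annulus `A = Q' \ Q''` between concentric axis-parallel cubes with
side lengths `ℓ' − ℓ'' = 2r` intersects any axis-parallel cube `P` in measure at most
`C(n) r |P|^{(n-1)/n}`. -/
theorem stmt11 (n : ℕ) (hn : 0 < n) :
    ∃ C : ℝ, 0 < C ∧
      ∀ (c p : Fin n → ℝ) (l'' r s : ℝ), 0 ≤ l'' → 0 ≤ r → 0 < s →
        volume (ball p (s / 2) ∩
            (ball c ((l'' + 2 * r) / 2) \ ball c (l'' / 2))) ≤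
          ENNReal.ofReal (C * r) *
            (volume (ball p (s / 2))) ^ (((n : ℝ) - 1) / n) := by
  refine ⟨2 * n, by positivity, fun c p l'' r s hl _ hs => ?_⟩
  have : Nonempty (Fin n) := ⟨⟨0, hn⟩⟩
  have hP : volume (ball p (s / 2)) = ENNReal.ofReal s ^ n := by
    rw [Real.volume_pi_ball p (by positivity), mul_div_cancel₀ _ two_ne_zero,
      Fintype.card_fin, ENNReal.ofReal_pow hs.le]
  have hC : ENNReal.ofReal (2 * n * r) = n * ENNReal.ofReal (2 * r) := by
    rw [mul_comm 2, mul_assoc, ENNReal.ofReal_mul (Nat.cast_nonneg n), ENNReal.ofReal_natCast]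
  have hA := Real.volume_pi_ball_inter_ball_diff_ball_le p c (s / 2) ((l'' + 2 * r) / 2)
    (by positivity : 0 ≤ l'' / 2)
  rw [show (l'' + 2 * r) / 2 - l'' / 2 = r by ring, mul_div_cancel₀ _ two_ne_zero,
    Fintype.card_fin] at hA
  rwa [hP, ENNReal.pow_rpow_sub_one_div _ hn, hC, mul_assoc]
end

section
/- Let Q' be an axis-parallel cube in ℝⁿ. There is a Whitney decomposition W of Q': a countable family of pairwise non-overlapping axis-parallel cubes Q with ℓ(Q) = dist(Q, ∂Q') whose union is Q' up to a set of measure zero, obtained by taking the central cube of side ℓ(Q')/3 and then dyadically subdividing towards the boundary. -/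
/-!
In the sup metric `ball c r` is the cube `Q'`. Besides the central cube `ball c (r / 3)`, the
`m`-th shell `r - 2 s ≤ dist x c < r - s`, with `s = r / (3 * 2 ^ m)`, is tiled by the cubes of
the grid of mesh `s` anchored at `c` that lie in the sup-norm layer `3 * 2 ^ m - 2` around `c`.
Such a cube reaches out exactly to sup-distance `r - s` from `c`, so its distance to `∂Q'` equals
its side `s`. Consecutive shells abut because the mesh halves, and the only points of `Q'` that
are missed lie on the countably many grid hyperplanes.
-/

open MeasureTheory Metric ENNReal Set

section SphereDistance

variable {E : Type*} [NormedAddCommGroup E] [NormedSpace ℝ E] [Nontrivial E]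

theorem exists_mem_sphere_dist_eq {c x : E} {r : ℝ} (hx : x ∈ closedBall c r) :
    ∃ y ∈ sphere c r, dist x y = r - dist x c := by
  rcases eq_or_ne x c with rfl | hxc
  · obtain ⟨y, hy⟩ := (NormedSpace.sphere_nonempty (x := x)).2 (nonneg_of_mem_closedBall hx)
    exact ⟨y, hy, by rw [dist_self, sub_zero, dist_comm, mem_sphere.1 hy]⟩
  have hd : 0 < ‖x - c‖ := norm_pos_iff.2 (sub_ne_zero.2 hxc)
  have hdr : ‖x - c‖ ≤ r := by rwa [← dist_eq_norm]
  refine ⟨c + (r / ‖x - c‖) • (x - c), ?_, ?_⟩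
  · rw [mem_sphere, dist_eq_norm, add_sub_cancel_left, norm_smul, Real.norm_of_nonneg
      (div_nonneg (hd.le.trans hdr) hd.le), div_mul_cancel₀ _ hd.ne']
  · have : x - (c + (r / ‖x - c‖) • (x - c)) = (1 - r / ‖x - c‖) • (x - c) := by
      rw [sub_smul, one_smul]; abel
    rw [dist_eq_norm, this, norm_smul, Real.norm_of_nonpos, dist_eq_norm]
    · field_simp; ring
    · rw [sub_nonpos, le_div_iff₀ hd, one_mul]; exact hdr

theorem infEDist_sphere_of_mem_closedBall {c x : E} {r : ℝ} (hx : x ∈ closedBall c r) :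
    infEDist x (sphere c r) = ENNReal.ofReal (r - dist x c) := by
  obtain ⟨y, hy, hxy⟩ := exists_mem_sphere_dist_eq hx
  refine le_antisymm ?_ (le_infEDist.2 fun z hz => ?_)
  · calc infEDist x (sphere c r) ≤ edist x y := infEDist_le_edist_of_mem hy
      _ = ENNReal.ofReal (r - dist x c) := by rw [edist_dist, hxy]
  · rw [edist_dist]
    refine ofReal_le_ofReal ?_
    linarith [dist_triangle z x c, dist_comm x z, mem_sphere.1 hz]

theorem iInf_infEDist_sphere_eq {c : E} {r d : ℝ} {K : Set E} (hK : ∀ x ∈ K, dist x c ≤ d)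
    (hd : ∃ y ∈ K, dist y c = d) (hdr : d ≤ r) :
    ⨅ x ∈ K, infEDist x (sphere c r) = ENNReal.ofReal (r - d) := by
  have hmem : ∀ x ∈ K, x ∈ closedBall c r := fun x hx => (hK x hx).trans hdr
  obtain ⟨y, hyK, hyd⟩ := hd
  refine le_antisymm ?_ (le_iInf₂ fun x hx => ?_)
  · calc ⨅ x ∈ K, infEDist x (sphere c r) ≤ infEDist y (sphere c r) :=
          iInf₂_le y hyK
      _ = ENNReal.ofReal (r - d) := by rw [infEDist_sphere_of_mem_closedBall (hmem y hyK), hyd]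
  · rw [infEDist_sphere_of_mem_closedBall (hmem x hx)]
    exact ofReal_le_ofReal (by linarith [hK x hx])

end SphereDistance

namespace Whitney

/-- `|·|` maps `[z * L, (z + 1) * L]` onto `[intLayer z * L, (intLayer z + 1) * L]`. -/
def intLayer (z : ℤ) : ℕ := (max z (-(z + 1))).toNat

lemma intLayer_cases (z : ℤ) :
    (0 ≤ (z : ℝ) ∧ (intLayer z : ℝ) = z) ∨
      ((z : ℝ) + 1 ≤ 0 ∧ (intLayer z : ℝ) = -(z + 1)) := by
  have h : (intLayer z : ℤ) = max z (-(z + 1)) := Int.toNat_of_nonneg (by omega)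
  rcases le_or_gt 0 z with hz | hz
  · left
    exact ⟨by exact_mod_cast hz, by exact_mod_cast h.trans (max_eq_left (by omega))⟩
  · right
    exact ⟨by exact_mod_cast (show z + 1 ≤ 0 by omega),
      by exact_mod_cast h.trans (max_eq_right (by omega))⟩

variable {L t : ℝ} {z : ℤ}

lemma abs_mem_Ioo_of_mem_Ioo (ht : t ∈ Ioo (z * L) ((z + 1) * L)) :
    |t| ∈ Ioo (intLayer z * L) ((intLayer z + 1) * L) := by
  obtain ⟨h1, h2⟩ := ht
  have hL : 0 < L := by nlinarith
  rcases intLayer_cases z with ⟨hz, hl⟩ | ⟨hz, hl⟩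
  · rw [abs_of_pos (by nlinarith), hl]; exact ⟨h1, h2⟩
  · rw [abs_of_neg (by nlinarith), hl]; constructor <;> linarith

lemma abs_le_of_mem_Icc (ht : t ∈ Icc (z * L) ((z + 1) * L)) :
    |t| ≤ (intLayer z + 1) * L := by
  obtain ⟨h1, h2⟩ := ht
  have hL : 0 ≤ L := by nlinarith
  rcases intLayer_cases z with ⟨hz, hl⟩ | ⟨hz, hl⟩ <;> rw [abs_le, hl] <;> constructor <;>
    nlinarith

lemma exists_mem_Icc_abs_eq (hL : 0 ≤ L) (z : ℤ) :
    ∃ t ∈ Icc (z * L) ((z + 1) * L), |t| = (intLayer z + 1) * L := by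
  rcases intLayer_cases z with ⟨hz, hl⟩ | ⟨hz, hl⟩
  · exact ⟨(z + 1) * L, ⟨by linarith, le_rfl⟩, by rw [abs_of_nonneg (by positivity), hl]⟩
  · exact ⟨z * L, ⟨le_rfl, by linarith⟩, by rw [abs_of_nonpos (by nlinarith), hl]; ring⟩

variable {ι : Type*} [Fintype ι]

noncomputable def gridCenter (c : ι → ℝ) (L : ℝ) (k : ι → ℤ) : ι → ℝ :=
  fun i => c i + (k i + 1 / 2) * L

def layer (k : ι → ℤ) : ℕ := Finset.univ.sup fun i => intLayer (k i)

lemma intLayer_le_layer (k : ι → ℤ) (i : ι) : (intLayer (k i) : ℝ) ≤ layer k := by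
  exact_mod_cast Finset.le_sup (f := fun i => intLayer (k i)) (Finset.mem_univ i)

lemma exists_intLayer_eq_layer [Nonempty ι] (k : ι → ℤ) : ∃ i, intLayer (k i) = layer k := by
  obtain ⟨i, -, hi⟩ := Finset.exists_mem_eq_sup _ Finset.univ_nonempty fun i => intLayer (k i)
  exact ⟨i, hi.symm⟩

variable {c x : ι → ℝ} {k k' : ι → ℤ}

lemma mem_ball_gridCenter_iff (hL : 0 < L) :
    x ∈ ball (gridCenter c L k) (L / 2) ↔ ∀ i, x i - c i ∈ Ioo (k i * L) ((k i + 1) * L) := by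
  simp only [ball_pi _ (half_pos hL), Real.ball_eq_Ioo, mem_pi, mem_univ, true_imp_iff,
    mem_Ioo, gridCenter]
  refine forall_congr' fun i => ?_
  constructor <;> rintro ⟨h1, h2⟩ <;> constructor <;> linarith

lemma mem_closedBall_gridCenter_iff (hL : 0 ≤ L) :
    x ∈ closedBall (gridCenter c L k) (L / 2) ↔
      ∀ i, x i - c i ∈ Icc (k i * L) ((k i + 1) * L) := by
  simp only [closedBall_pi _ (by positivity : 0 ≤ L / 2), Real.closedBall_eq_Icc, mem_pi,
    mem_univ, true_imp_iff, mem_Icc, gridCenter]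
  refine forall_congr' fun i => ?_
  constructor <;> rintro ⟨h1, h2⟩ <;> constructor <;> linarith

lemma dist_mem_Ioo_of_mem_ball_gridCenter [Nonempty ι]
    (hx : x ∈ ball (gridCenter c L k) (L / 2)) :
    dist x c ∈ Ioo (layer k * L) ((layer k + 1) * L) := by
  have hL : 0 < L := by linarith [pos_of_mem_ball hx]
  have habs i := abs_mem_Ioo_of_mem_Ioo ((mem_ball_gridCenter_iff hL).1 hx i)
  obtain ⟨j, hj⟩ := exists_intLayer_eq_layer k
  constructor
  · calc (layer k : ℝ) * L = intLayer (k j) * L := by rw [hj]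
      _ < |x j - c j| := (habs j).1
      _ = dist (x j) (c j) := (Real.dist_eq _ _).symm
      _ ≤ dist x c := dist_le_pi_dist x c j
  · refine (dist_pi_lt_iff (by positivity)).2 fun i => ?_
    rw [Real.dist_eq]
    nlinarith [(habs i).2, intLayer_le_layer k i]

lemma dist_le_of_mem_closedBall_gridCenter (hx : x ∈ closedBall (gridCenter c L k) (L / 2)) :
    dist x c ≤ (layer k + 1) * L := by
  have hL : 0 ≤ L := by linarith [nonneg_of_mem_closedBall hx]
  refine (dist_pi_le_iff (by positivity)).2 fun i => ?_
  rw [Real.dist_eq]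
  nlinarith [abs_le_of_mem_Icc ((mem_closedBall_gridCenter_iff hL).1 hx i),
    intLayer_le_layer k i]

lemma exists_mem_closedBall_gridCenter_dist_eq [Nonempty ι] (hL : 0 ≤ L) (c : ι → ℝ)
    (k : ι → ℤ) : ∃ y ∈ closedBall (gridCenter c L k) (L / 2), dist y c = (layer k + 1) * L := by
  choose t ht htabs using fun i => exists_mem_Icc_abs_eq hL (k i)
  have hmem : c + t ∈ closedBall (gridCenter c L k) (L / 2) :=
    (mem_closedBall_gridCenter_iff hL).2 fun i => by simpa using ht i
  obtain ⟨j, hj⟩ := exists_intLayer_eq_layer k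
  refine ⟨c + t, hmem, (dist_le_of_mem_closedBall_gridCenter hmem).antisymm ?_⟩
  calc ((layer k : ℝ) + 1) * L = |t j| := by rw [htabs, hj]
    _ = dist ((c + t) j) (c j) := by simp
    _ ≤ dist (c + t) c := dist_le_pi_dist _ _ j

lemma disjoint_ball_gridCenter (hkk : k ≠ k') :
    Disjoint (ball (gridCenter c L k) (L / 2)) (ball (gridCenter c L k') (L / 2)) := by
  obtain ⟨i, hi⟩ := Function.ne_iff.1 hkk
  refine Set.disjoint_left.2 fun x hx hx' => ?_
  have hL : 0 < L := by linarith [pos_of_mem_ball hx]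
  have h := (mem_ball_gridCenter_iff hL).1 hx i
  have h' := (mem_ball_gridCenter_iff hL).1 hx' i
  have hdisj := pairwise_disjoint_Ioo_zsmul L hi
  simp only [Function.onFun, zsmul_eq_mul, Int.cast_add, Int.cast_one] at hdisj
  exact Set.disjoint_left.1 hdisj h h'

lemma mem_ball_gridCenter_floor (hL : 0 < L) (hx : ∀ i, ∀ z : ℤ, x i ≠ c i + z * L) :
    x ∈ ball (gridCenter c L fun i => ⌊(x i - c i) / L⌋) (L / 2) := by
  refine (mem_ball_gridCenter_iff hL).2 fun i => ⟨?_, ?_⟩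
  · refine lt_of_le_of_ne ((le_div_iff₀ hL).1 (Int.floor_le _)) fun h => ?_
    exact hx i ⌊(x i - c i) / L⌋ (by linarith)
  · exact (div_lt_iff₀ hL).1 (Int.lt_floor_add_one _)

noncomputable def side (r : ℝ) (m : ℕ) : ℝ := r / (3 * 2 ^ m)

variable {r : ℝ} {m m' : ℕ}

lemma side_pos (hr : 0 < r) (m : ℕ) : 0 < side r m := by unfold side; positivity

lemma side_mul (r : ℝ) (m : ℕ) : side r m * (3 * 2 ^ m) = r := by unfold side; field_simp

lemma two_mul_side_succ (r : ℝ) (m : ℕ) : 2 * side r (m + 1) = side r m := by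
  unfold side; rw [pow_succ]; field_simp

lemma side_le_side (hr : 0 ≤ r) (h : m ≤ m') : side r m' ≤ side r m :=
  div_le_div_of_nonneg_left hr (by positivity)
    (mul_le_mul_of_nonneg_left (pow_le_pow_right₀ one_le_two h) (by norm_num))

lemma exists_side_lt_le {s : ℝ} (hs : 0 < s) (hsr : s ≤ 2 * r / 3) :
    ∃ m, side r m < s ∧ s ≤ 2 * side r m := by
  obtain ⟨m, h1, h2⟩ := exists_nat_pow_near (x := 2 * r / (3 * s)) (y := (2 : ℝ))
    (by rw [le_div_iff₀ (by positivity)]; linarith) one_lt_two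
  rw [le_div_iff₀ (by positivity)] at h1
  rw [div_lt_iff₀ (by positivity), pow_succ] at h2
  have := side_mul r m
  refine ⟨m, ?_, ?_⟩ <;> nlinarith [pow_pos (two_pos : (0 : ℝ) < 2) m]

lemma layer_cast_of_shell (hk : layer k + 2 = 3 * 2 ^ m) :
    (layer k : ℝ) = 3 * 2 ^ m - 2 := by
  rw [eq_sub_iff_add_eq]; exact_mod_cast hk

variable (ι) in
/-- `none` is the central cube `ball c (r / 3)`; `some ⟨m, k⟩` is the grid cube of side `side r m`
at position `k`, and the layer condition places it in the shell
`r - 2 * side r m < dist · c < r - side r m`. -/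
abbrev Index : Type _ := Option (Σ m : ℕ, {k : ι → ℤ // layer k + 2 = 3 * 2 ^ m})

noncomputable def center (c : ι → ℝ) (r : ℝ) : Index ι → ι → ℝ
  | none => c
  | some ⟨m, k, _⟩ => gridCenter c (side r m) k

noncomputable def radius (r : ℝ) : Index ι → ℝ
  | none => r / 3
  | some ⟨m, _⟩ => side r m / 2

lemma radius_pos (hr : 0 < r) : ∀ i : Index ι, 0 < radius r i
  | none => by simp only [radius]; positivity
  | some ⟨m, _⟩ => half_pos (side_pos hr m)

variable [Nonempty ι]

lemma dist_mem_Ioo_of_mem_shell (hk : layer k + 2 = 3 * 2 ^ m)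
    (hx : x ∈ ball (gridCenter c (side r m) k) (side r m / 2)) :
    dist x c ∈ Ioo (r - 2 * side r m) (r - side r m) := by
  have h := dist_mem_Ioo_of_mem_ball_gridCenter hx
  rw [layer_cast_of_shell hk] at h
  have := side_mul r m
  constructor <;> linarith [h.1, h.2]

lemma iInf_infEDist_shell (hr : 0 < r) (hk : layer k + 2 = 3 * 2 ^ m) :
    ⨅ x ∈ closedBall (gridCenter c (side r m) k) (side r m / 2), infEDist x (sphere c r) =
      ENNReal.ofReal (side r m) := by
  have hL := side_pos hr m
  have hdist : ((layer k : ℝ) + 1) * side r m = r - side r m := by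
    rw [layer_cast_of_shell hk]
    linarith [side_mul r m]
  rw [iInf_infEDist_sphere_eq (d := r - side r m)
    (fun x hx => hdist ▸ dist_le_of_mem_closedBall_gridCenter hx)
    (hdist ▸ exists_mem_closedBall_gridCenter_dist_eq hL.le c k) (by linarith),
    _root_.sub_sub_cancel]

lemma disjoint_ball_center_shell (hr : 0 < r) (hk : layer k + 2 = 3 * 2 ^ m) :
    Disjoint (ball c (r / 3)) (ball (gridCenter c (side r m) k) (side r m / 2)) := by
  refine Set.disjoint_left.2 fun x hx hx' => ?_
  have h := (dist_mem_Ioo_of_mem_shell hk hx').1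
  have h0 : side r 0 = r / 3 := by simp [side]
  linarith [mem_ball.1 hx, side_le_side hr.le (Nat.zero_le m)]

lemma disjoint_shell_of_lt (hr : 0 < r) (hk : layer k + 2 = 3 * 2 ^ m)
    (hk' : layer k' + 2 = 3 * 2 ^ m') (h : m < m') :
    Disjoint (ball (gridCenter c (side r m) k) (side r m / 2))
      (ball (gridCenter c (side r m') k') (side r m' / 2)) := by
  refine Set.disjoint_left.2 fun x hx hx' => ?_
  linarith [(dist_mem_Ioo_of_mem_shell hk hx).2, (dist_mem_Ioo_of_mem_shell hk' hx').1,
    side_le_side hr.le h, two_mul_side_succ r m]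

lemma exists_shell_mem (hr : 0 < r) (hx : x ∈ ball c r) (hxc : r / 3 ≤ dist x c)
    (hgrid : ∀ m i, ∀ z : ℤ, x i ≠ c i + z * side r m) :
    ∃ m k, layer k + 2 = 3 * 2 ^ m ∧ x ∈ ball (gridCenter c (side r m) k) (side r m / 2) := by
  obtain ⟨m, hlt, hle⟩ := exists_side_lt_le (r := r) (sub_pos.2 (mem_ball.1 hx)) (by linarith)
  have hL := side_pos hr m
  set k : ι → ℤ := fun i => ⌊(x i - c i) / side r m⌋
  have hmem : x ∈ ball (gridCenter c (side r m) k) (side r m / 2) :=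
    mem_ball_gridCenter_floor hL (hgrid m)
  refine ⟨m, k, ?_, hmem⟩
  obtain ⟨h1, h2⟩ := dist_mem_Ioo_of_mem_ball_gridCenter hmem
  have hr' := side_mul r m
  have hup : (layer k : ℝ) < 3 * 2 ^ m - 1 := lt_of_mul_lt_mul_right (by linarith) hL.le
  have hlo : (3 * 2 ^ m - 2 : ℝ) < layer k + 1 := lt_of_mul_lt_mul_right (by linarith) hL.le
  have hup' : layer k + 1 < 3 * 2 ^ m := by
    exact_mod_cast (by linarith : (layer k : ℝ) + 1 < 3 * 2 ^ m)
  have hlo' : 3 * 2 ^ m < layer k + 3 := by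
    exact_mod_cast (by linarith : (3 * 2 ^ m : ℝ) < layer k + 3)
  omega

instance : Infinite (Index ι) := by
  refine Infinite.of_injective (fun m : ℕ => some ⟨m, fun _ => (3 * 2 ^ m - 2 : ℕ), ?_⟩)
    fun m m' h => congrArg Sigma.fst (Option.some_injective _ h)
  have h : 2 ≤ 3 * 2 ^ m := by have := Nat.one_le_two_pow (n := m); omega
  simp only [layer, intLayer, Finset.sup_const Finset.univ_nonempty]
  omega

lemma ball_center_radius_subset (hr : 0 < r) :
    ∀ i : Index ι, ball (center c r i) (radius r i) ⊆ ball c r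
  | none => Metric.ball_subset_ball (by simp only [radius]; linarith)
  | some ⟨m, k, hk⟩ => fun x hx =>
    mem_ball.2 ((dist_mem_Ioo_of_mem_shell hk hx).2.trans_le (by linarith [side_pos hr m]))

lemma pairwise_disjoint_ball (hr : 0 < r) :
    Pairwise fun i j : Index ι =>
      Disjoint (ball (center c r i) (radius r i)) (ball (center c r j) (radius r j)) := by
  rintro (_ | ⟨m, k, hk⟩) (_ | ⟨m', k', hk'⟩) hne
  · exact absurd rfl hne
  · exact disjoint_ball_center_shell hr hk'
  · exact (disjoint_ball_center_shell hr hk).symm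
  · rcases lt_trichotomy m m' with h | rfl | h
    · exact disjoint_shell_of_lt hr hk hk' h
    · exact disjoint_ball_gridCenter fun h => hne (by subst h; rfl)
    · exact (disjoint_shell_of_lt hr hk' hk h).symm

lemma ofReal_two_mul_radius (hr : 0 < r) (i : Index ι) :
    ENNReal.ofReal (2 * radius r i) =
      ⨅ x ∈ closure (ball (center c r i) (radius r i)), infEDist x (frontier (ball c r)) := by
  rw [closure_ball _ (radius_pos hr i).ne', frontier_ball c hr.ne']
  rcases i with _ | ⟨m, k, hk⟩ <;> simp only [center, radius]
  · obtain ⟨y, hy⟩ := (NormedSpace.sphere_nonempty (x := c)).2 (by positivity : 0 ≤ r / 3)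
    rw [iInf_infEDist_sphere_eq (fun x => mem_closedBall.1) ⟨y, sphere_subset_closedBall hy, hy⟩
      (by linarith)]
    ring_nf
  · rw [iInf_infEDist_shell hr hk]
    ring_nf

lemma diff_iUnion_subset (hr : 0 < r) :
    ball c r \ ⋃ i : Index ι, ball (center c r i) (radius r i) ⊆
      ⋃ (m : ℕ) (i : ι) (z : ℤ), {x | x i = c i + z * side r m} := by
  rintro x ⟨hx, hxU⟩
  by_contra hgrid
  simp only [mem_iUnion, not_exists] at hgrid
  refine hxU (mem_iUnion.2 ?_)
  rcases lt_or_ge (dist x c) (r / 3) with h | h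
  · exact ⟨none, mem_ball.2 h⟩
  · obtain ⟨m, k, hk, hmem⟩ := exists_shell_mem hr hx h hgrid
    exact ⟨some ⟨m, k, hk⟩, hmem⟩

lemma volume_ball_diff_iUnion_eq_zero (hr : 0 < r) :
    volume (ball c r \ ⋃ i : Index ι, ball (center c r i) (radius r i)) = 0 :=
  measure_mono_null (diff_iUnion_subset hr) <| measure_iUnion_null fun _ =>
    measure_iUnion_null fun i => measure_iUnion_null fun _ =>
      Measure.pi_hyperplane _ i _

end Whitney

/-- Whitney decomposition of an axis-parallel cube `Q' = ball c r` (sup metric):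
countably many pairwise disjoint open subcubes whose side length equals their
distance to the boundary of `Q'` and whose union is `Q'` up to measure zero. -/
theorem stmt17 (n : ℕ) (hn : 0 < n) (c : Fin n → ℝ) (r : ℝ) (hr : 0 < r) :
    ∃ (cs : ℕ → Fin n → ℝ) (rs : ℕ → ℝ),
      (∀ k, 0 < rs k) ∧
      (∀ k, ball (cs k) (rs k) ⊆ ball c r) ∧
      (Pairwise fun j k => Disjoint (ball (cs j) (rs j)) (ball (cs k) (rs k))) ∧
      (∀ k, ENNReal.ofReal (2 * rs k) =
        ⨅ x ∈ closure (ball (cs k) (rs k)), EMetric.infEdist x (frontier (ball c r))) ∧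
      volume (ball c r \ ⋃ k, ball (cs k) (rs k)) = 0 := by
  have : Nonempty (Fin n) := ⟨⟨0, hn⟩⟩
  obtain ⟨_⟩ := nonempty_denumerable (Whitney.Index (Fin n))
  let e := (Denumerable.eqv (Whitney.Index (Fin n))).symm
  refine ⟨fun j => Whitney.center c r (e j), fun j => Whitney.radius r (e j),
    fun j => Whitney.radius_pos hr (e j), fun j => Whitney.ball_center_radius_subset hr (e j),
    (Whitney.pairwise_disjoint_ball hr).comp_of_injective e.injective,
    fun j => Whitney.ofReal_two_mul_radius hr (e j), ?_⟩
  rw [e.surjective.iUnion_comp fun i => ball (Whitney.center c r i) (Whitney.radius r i)]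
  exact Whitney.volume_ball_diff_iUnion_eq_zero hr
end
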